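/- Let (E_i, A_i, δ_i, □_i, P_i) be as in the standing setting, assume E_i = 0 for all but finitely many i ∈ ℤ, and assume that δ_i∘δ_{i+1} = 0, δ_i∘P_i = 0, and A_{i+1}∘A_i = 0 for all i. Then for every i, dim(ker(A_i)/im(A_{i-1})) ≤ dim(ker(δ_i)/im(δ_{i+1})), and Σ_i rank(δ_i) ≤ Σ_i rank(A_i). Moreover, equality Σ_i rank(δ_i) = Σ_i rank(A_i) holds if and only if dim(ker(A_i)/im(A_{i-1})) = dim(ker(δ_i)/im(δ_{i+1})) for every i. -/
import Mathlib


/-- `P` is the spectral projection of `B` onto the generalized zero eigenspace, i.e. the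
projection onto the generalized eigenspace for the eigenvalue `0` along the sum of the generalized
eigenspaces for the nonzero eigenvalues. -/
def IsGenZeroProj {V : Type*} [AddCommGroup V] [Module ℂ V] (B P : V →ₗ[ℂ] V) : Prop :=
  (∀ v ∈ Module.End.maxGenEigenspace B 0, P v = v) ∧
  (∀ μ : ℂ, μ ≠ 0 → ∀ v ∈ Module.End.maxGenEigenspace B μ, P v = 0)

/-- The operator `□_{i+1} = A_i ∘ δ_{i+1} + δ_{i+2} ∘ A_{i+1} : E_{i+1} → E_{i+1}` of the standing
setting.  Here `A i : E i → E (i+1)` is the `i`-th operator of the sequence and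
`δ i : E (i+1) → E i` denotes the codifferential `δ_{i+1}` of the paper. -/
noncomputable def Box (E : ℤ → Type*) [∀ i, AddCommGroup (E i)] [∀ i, Module ℂ (E i)]
    (A : ∀ i : ℤ, E i →ₗ[ℂ] E (i + 1)) (δ : ∀ i : ℤ, E (i + 1) →ₗ[ℂ] E i) (i : ℤ) :
    E (i + 1) →ₗ[ℂ] E (i + 1) :=
  A i ∘ₗ δ i + δ (i + 1) ∘ₗ A (i + 1)

private lemma commute_maxGen {V W : Type*} [AddCommGroup V] [Module ℂ V] [AddCommGroup W]
    [Module ℂ W] {f : V →ₗ[ℂ] W} {B : V →ₗ[ℂ] V} {B' : W →ₗ[ℂ] W}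
    (h : f ∘ₗ B = B' ∘ₗ f) (μ : ℂ) {x : V}
    (hx : x ∈ Module.End.maxGenEigenspace B μ) :
    f x ∈ Module.End.maxGenEigenspace B' μ := by
  rw [Module.End.mem_maxGenEigenspace] at hx ⊢
  obtain ⟨m, hm⟩ := hx
  refine ⟨m, ?_⟩
  have h1 : f ∘ₗ (B - μ • (1 : Module.End ℂ V)) = (B' - μ • (1 : Module.End ℂ W)) ∘ₗ f := by
    ext v
    have hv := LinearMap.congr_fun h v
    simp only [LinearMap.comp_apply] at hv
    simp [LinearMap.sub_apply, hv]
  have h1' : ∀ v, f ((B - μ • (1 : Module.End ℂ V)) v) = (B' - μ • (1 : Module.End ℂ W)) (f v) :=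
    fun v => LinearMap.congr_fun h1 v
  have h2 : ∀ n : ℕ, ∀ v, f (((B - μ • (1 : Module.End ℂ V)) ^ n) v)
      = ((B' - μ • (1 : Module.End ℂ W)) ^ n) (f v) := by
    intro n
    induction n with
    | zero => intro v; simp
    | succ n ih =>
      intro v
      rw [pow_succ, Module.End.mul_apply, ih, h1', ← Module.End.mul_apply, ← pow_succ]
  rw [← h2 m x, hm, map_zero]

private lemma key_ineq (E : ℤ → Type*) [∀ i, AddCommGroup (E i)] [∀ i, Module ℂ (E i)]
    [∀ i, FiniteDimensional ℂ (E i)]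
    (A : ∀ i : ℤ, E i →ₗ[ℂ] E (i + 1)) (δ : ∀ i : ℤ, E (i + 1) →ₗ[ℂ] E i)
    (P : ∀ i : ℤ, E (i + 1) →ₗ[ℂ] E (i + 1))
    (hP : ∀ i : ℤ, IsGenZeroProj (Box E A δ i) (P i))
    (hδδ : ∀ i : ℤ, δ i ∘ₗ δ (i + 1) = 0)
    (hδP : ∀ i : ℤ, δ i ∘ₗ P i = 0)
    (hAA : ∀ i : ℤ, A (i + 1) ∘ₗ A i = 0) (k : ℤ) :
    Module.finrank ℂ ↥(LinearMap.range (δ k)) + Module.finrank ℂ ↥(LinearMap.range (δ (k+1)))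
      ≤ Module.finrank ℂ ↥(LinearMap.range (A k))
        + Module.finrank ℂ ↥(LinearMap.range (A (k+1))) := by
  have hδδ' : ∀ (i : ℤ) (w : E (i + 1 + 1)), δ i (δ (i+1) w) = 0 := by
    intro i w
    have := LinearMap.congr_fun (hδδ i) w
    simpa using this
  have hAA' : ∀ (i : ℤ) (w : E i), A (i+1) (A i w) = 0 := by
    intro i w
    have := LinearMap.congr_fun (hAA i) w
    simpa using this
  set Bx := Box E A δ k with hBx
  set K := Module.End.maxGenEigenspace Bx 0 with hK
  set N := ⨆ μ : ℂ, ⨆ _ : μ ≠ 0, Module.End.maxGenEigenspace Bx μ with hN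
  -- maxGen μ ≤ N for μ ≠ 0
  have hleN : ∀ μ : ℂ, μ ≠ 0 → Module.End.maxGenEigenspace Bx μ ≤ N := by
    intro μ hμ
    exact le_iSup_of_le μ (le_iSup_of_le hμ le_rfl)
  have hKN_top : K ⊔ N = ⊤ := by
    rw [eq_top_iff, ← Module.End.iSup_maxGenEigenspace_eq_top (Bx : Module.End ℂ (E (k+1)))]
    refine iSup_le fun μ => ?_
    rcases eq_or_ne μ 0 with h | h
    · subst h; exact le_sup_of_le_left le_rfl
    · exact le_sup_of_le_right (hleN μ h)
  have hKN_disj : Disjoint K N :=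
    Module.End.independent_maxGenEigenspace (Bx : Module.End ℂ (E (k+1))) 0
  have hdim : Module.finrank ℂ K + Module.finrank ℂ N = Module.finrank ℂ (E (k+1)) := by
    have := Submodule.finrank_sup_add_finrank_inf_eq K N
    rw [hKN_top, hKN_disj.eq_bot] at this
    simpa [finrank_top] using this.symm
  -- δ k vanishes on K
  have hδK : ∀ v ∈ K, δ k v = 0 := by
    intro v hv
    have h1 : P k v = v := (hP k).1 v hv
    have h2 := LinearMap.congr_fun (hδP k) v
    simp only [LinearMap.comp_apply, LinearMap.zero_apply] at h2
    rw [← h1]; exact h2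
  -- commutation δ (k+1) ∘ Box (k+1) = Box k ∘ δ (k+1)
  have hcommδ : δ (k+1) ∘ₗ Box E A δ (k+1) = Bx ∘ₗ δ (k+1) := by
    ext v
    simp only [LinearMap.comp_apply, Box, LinearMap.add_apply, map_add, hBx]
    rw [hδδ' (k+1) (A (k+1+1) v), hδδ' k v]
    simp
  -- commutation A (k+1) ∘ Box k = Box (k+1) ∘ A (k+1)
  have hcommA : A (k+1) ∘ₗ Bx = Box E A δ (k+1) ∘ₗ A (k+1) := by
    ext v
    simp only [LinearMap.comp_apply, Box, LinearMap.add_apply, map_add, hBx]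
    rw [hAA' k (δ k v), hAA' (k+1) v]
    simp
  -- range of δ (k+1) lands in N and in ker (δ k)
  have hrangeδN : LinearMap.range (δ (k+1)) ≤ N := by
    rw [LinearMap.range_eq_map, ← Module.End.iSup_maxGenEigenspace_eq_top
      (Box E A δ (k+1) : Module.End ℂ (E (k+1+1))), Submodule.map_iSup]
    refine iSup_le fun μ => ?_
    rcases eq_or_ne μ 0 with h | h
    · subst h
      rintro _ ⟨y, hy, rfl⟩
      have h1 : P (k+1) y = y := (hP (k+1)).1 y hy
      have h2 := LinearMap.congr_fun (hδP (k+1)) y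
      simp only [LinearMap.comp_apply, LinearMap.zero_apply] at h2
      rw [← h1, h2]
      exact zero_mem _
    · rintro _ ⟨y, hy, rfl⟩
      exact hleN μ h (commute_maxGen hcommδ μ hy)
  have hrangeδker : LinearMap.range (δ (k+1)) ≤ LinearMap.ker (δ k) := by
    rintro _ ⟨y, rfl⟩
    exact hδδ' k y
  -- Claim A : d k + d (k+1) ≤ dim N
  have claimA : Module.finrank ℂ ↥(LinearMap.range (δ k))
      + Module.finrank ℂ ↥(LinearMap.range (δ (k+1))) ≤ Module.finrank ℂ N := by
    set f := (δ k) ∘ₗ N.subtype with hf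
    have rn : Module.finrank ℂ ↥(LinearMap.range f) + Module.finrank ℂ ↥(LinearMap.ker f)
        = Module.finrank ℂ N := LinearMap.finrank_range_add_finrank_ker f
    have hrangef : LinearMap.range f = LinearMap.range (δ k) := by
      rw [hf, LinearMap.range_comp, Submodule.range_subtype]
      rw [LinearMap.range_eq_map, ← hKN_top, Submodule.map_sup]
      have : Submodule.map (δ k) K = ⊥ := by
        rw [eq_bot_iff]
        rintro _ ⟨v, hv, rfl⟩
        simp [hδK v hv]
      rw [this, bot_sup_eq]
    have hkerf : Module.finrank ℂ ↥(LinearMap.ker f)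
        = Module.finrank ℂ ↥(LinearMap.ker (δ k) ⊓ N) := by
      have h1 : LinearMap.ker f = Submodule.comap N.subtype (LinearMap.ker (δ k) ⊓ N) := by
        rw [hf, LinearMap.ker_comp, Submodule.comap_inf, Submodule.comap_subtype_self, inf_top_eq]
      rw [h1]
      exact (Submodule.comapSubtypeEquivOfLe inf_le_right).finrank_eq
    have hd1 : Module.finrank ℂ ↥(LinearMap.range (δ (k+1)))
        ≤ Module.finrank ℂ ↥(LinearMap.ker (δ k) ⊓ N) :=
      Submodule.finrank_mono (le_inf hrangeδker hrangeδN)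
    rw [hrangef, hkerf] at rn
    omega
  -- Claim B : dim N ≤ a k + a (k+1)
  have claimB : Module.finrank ℂ N ≤ Module.finrank ℂ ↥(LinearMap.range (A k))
      + Module.finrank ℂ ↥(LinearMap.range (A (k+1))) := by
    set g := (A (k+1)) ∘ₗ N.subtype with hg
    have rn : Module.finrank ℂ ↥(LinearMap.range g) + Module.finrank ℂ ↥(LinearMap.ker g)
        = Module.finrank ℂ N := LinearMap.finrank_range_add_finrank_ker g
    have hrg : Module.finrank ℂ ↥(LinearMap.range g)
        ≤ Module.finrank ℂ ↥(LinearMap.range (A (k+1))) := by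
      refine Submodule.finrank_mono ?_
      rw [hg, LinearMap.range_comp]
      exact LinearMap.map_le_range
    have hkerg : Module.finrank ℂ ↥(LinearMap.ker g)
        = Module.finrank ℂ ↥(LinearMap.ker (A (k+1)) ⊓ N) := by
      have h1 : LinearMap.ker g = Submodule.comap N.subtype (LinearMap.ker (A (k+1)) ⊓ N) := by
        rw [hg, LinearMap.ker_comp, Submodule.comap_inf, Submodule.comap_subtype_self, inf_top_eq]
      rw [h1]
      exact (Submodule.comapSubtypeEquivOfLe inf_le_right).finrank_eq
    set W := LinearMap.ker (A (k+1)) ⊓ N with hW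
    -- Bx maps N into N
    have hBxN : ∀ x ∈ N, Bx x ∈ N := by
      intro x hx
      have hmap : Submodule.map Bx N ≤ N := by
        rw [hN, Submodule.map_iSup]
        refine iSup_le fun μ => ?_
        rw [Submodule.map_iSup]
        refine iSup_le fun hμ => ?_
        rintro _ ⟨y, hy, rfl⟩
        exact hleN μ hμ (commute_maxGen (rfl : Bx ∘ₗ Bx = Bx ∘ₗ Bx) μ hy)
      exact hmap ⟨x, hx, rfl⟩
    -- Bx maps W into W
    have hWmap : ∀ x ∈ W, Bx x ∈ W := by
      rintro x ⟨hx1, hx2⟩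
      refine ⟨?_, hBxN x hx2⟩
      have := LinearMap.congr_fun hcommA x
      simp only [LinearMap.comp_apply] at this
      have hx1' : A (k+1) x = 0 := hx1
      show Bx x ∈ LinearMap.ker (A (k+1))
      rw [LinearMap.mem_ker, this, hx1', map_zero]
    set e : W →ₗ[ℂ] W := Bx.restrict hWmap with he
    have hinj : Function.Injective e := by
      rw [← LinearMap.ker_eq_bot, eq_bot_iff]
      rintro ⟨x, hx⟩ hex
      have hx0 : Bx x = 0 := by
        have : ((e ⟨x, hx⟩ : W) : E (k+1)) = Bx x := rfl
        rw [LinearMap.mem_ker] at hex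
        rw [hex] at this
        exact this.symm
      have hxK : x ∈ K := by
        rw [hK, Module.End.mem_maxGenEigenspace]
        exact ⟨1, by simpa using hx0⟩
      have hxN : x ∈ N := hx.2
      have : x = 0 := by
        have := hKN_disj.le_bot (Submodule.mem_inf.mpr ⟨hxK, hxN⟩)
        simpa using this
      simp [this]
    have hsurj : Function.Surjective e := LinearMap.injective_iff_surjective.mp hinj
    have hWle : W ≤ LinearMap.range (A k) := by
      intro x hx
      obtain ⟨⟨y, hy⟩, hey⟩ := hsurj ⟨x, hx⟩
      have hyx : Bx y = x := by
        have : ((e ⟨y, hy⟩ : W) : E (k+1)) = Bx y := rfl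
        rw [hey] at this
        exact this.symm
      have hyker : A (k+1) y = 0 := hy.1
      have : Bx y = A k (δ k y) := by
        rw [hBx]
        simp only [Box, LinearMap.add_apply, LinearMap.comp_apply, hyker, map_zero, add_zero]
      rw [← hyx, this]
      exact ⟨δ k y, rfl⟩
    have hWdim : Module.finrank ℂ ↥W ≤ Module.finrank ℂ ↥(LinearMap.range (A k)) :=
      Submodule.finrank_mono hWle
    rw [hkerg] at rn
    omega
  omega

private lemma hom_count {U V W : Type*} [AddCommGroup U] [Module ℂ U] [AddCommGroup V] [Module ℂ V]
    [AddCommGroup W] [Module ℂ W] [FiniteDimensional ℂ V]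
    (B : U →ₗ[ℂ] V) (C : V →ₗ[ℂ] W) (h : C ∘ₗ B = 0) :
    Module.finrank ℂ (↥(LinearMap.ker C) ⧸
        Submodule.comap (LinearMap.ker C).subtype (LinearMap.range B))
      + Module.finrank ℂ ↥(LinearMap.range B) + Module.finrank ℂ ↥(LinearMap.range C)
      = Module.finrank ℂ V := by
  have hle : LinearMap.range B ≤ LinearMap.ker C := by
    rintro _ ⟨x, rfl⟩
    have := LinearMap.congr_fun h x
    simpa using this
  have e1 := Submodule.finrank_quotient_add_finrank
    (Submodule.comap (LinearMap.ker C).subtype (LinearMap.range B))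
  have e2 : Module.finrank ℂ (Submodule.comap (LinearMap.ker C).subtype (LinearMap.range B))
      = Module.finrank ℂ (LinearMap.range B) :=
    (Submodule.comapSubtypeEquivOfLe hle).finrank_eq
  have e3 := LinearMap.finrank_range_add_finrank_ker C
  omega

private lemma sum_lemma (a d n hA hδ : ℤ → ℕ) (U : Finset ℤ)
    (hA_eq : ∀ k, hA k + a k + a (k + 1) = n k)
    (hδ_eq : ∀ k, hδ k + d (k + 1) + d k = n k)
    (key : ∀ k, d k + d (k + 1) ≤ a k + a (k + 1))
    (hsupp : ∀ i, i ∉ U → a i = 0 ∧ d i = 0 ∧ n i = 0) :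
    (∀ k, hA k ≤ hδ k) ∧ ((∑ᶠ i, d i) ≤ ∑ᶠ i, a i) ∧
      (((∑ᶠ i, d i) = ∑ᶠ i, a i) ↔ ∀ k, hA k = hδ k) := by
  have point : ∀ k, hA k ≤ hδ k := by
    intro k
    have h1 := hA_eq k
    have h2 := hδ_eq k
    have h3 := key k
    omega
  have hA0 : ∀ i, i ∉ U → hA i = 0 := by
    intro i hi
    have h1 := hA_eq i
    have h2 := (hsupp i hi).2.2
    omega
  have hδ0 : ∀ i, i ∉ U → hδ i = 0 := by
    intro i hi
    have h1 := hδ_eq i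
    have h2 := (hsupp i hi).2.2
    omega
  set V : Finset ℤ := U ∪ U.image (fun i => i - 1) with hV
  have hUV : (U : Set ℤ) ⊆ (V : Set ℤ) := by
    intro i hi
    simp only [hV, Finset.coe_union, Set.mem_union, Finset.mem_coe] at *
    exact Or.inl hi
  have sa : Function.support a ⊆ (U : Set ℤ) := by
    intro i hi
    by_contra h
    exact hi ((hsupp i (by simpa using h)).1)
  have sd : Function.support d ⊆ (U : Set ℤ) := by
    intro i hi
    by_contra h
    exact hi ((hsupp i (by simpa using h)).2.1)
  have shA : Function.support hA ⊆ (U : Set ℤ) := by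
    intro i hi
    by_contra h
    exact hi (hA0 i (by simpa using h))
  have shδ : Function.support hδ ⊆ (U : Set ℤ) := by
    intro i hi
    by_contra h
    exact hi (hδ0 i (by simpa using h))
  have shift_mem : ∀ i : ℤ, i + 1 ∈ U → i ∈ V := by
    intro i hi
    simp only [hV, Finset.mem_union, Finset.mem_image]
    exact Or.inr ⟨i + 1, hi, by ring⟩
  have sa' : Function.support (fun i => a (i + 1)) ⊆ (V : Set ℤ) := by
    intro i hi
    have : a (i + 1) ≠ 0 := hi
    have := sa this
    exact shift_mem i (by simpa using this)
  have sd' : Function.support (fun i => d (i + 1)) ⊆ (V : Set ℤ) := by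
    intro i hi
    have : d (i + 1) ≠ 0 := hi
    have := sd this
    exact shift_mem i (by simpa using this)
  have hfa : (Function.support a).Finite := Set.Finite.subset V.finite_toSet (sa.trans hUV)
  have hfd : (Function.support d).Finite := Set.Finite.subset V.finite_toSet (sd.trans hUV)
  have hfhA : (Function.support hA).Finite := Set.Finite.subset V.finite_toSet (shA.trans hUV)
  have hfhδ : (Function.support hδ).Finite := Set.Finite.subset V.finite_toSet (shδ.trans hUV)
  have hfa' : (Function.support fun i => a (i + 1)).Finite :=
    Set.Finite.subset V.finite_toSet sa'
  have hfd' : (Function.support fun i => d (i + 1)).Finite :=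
    Set.Finite.subset V.finite_toSet sd'
  have hfinner_d : (Function.support fun i => d (i + 1) + hδ i).Finite := by
    refine Set.Finite.subset (hfd'.union hfhδ) ?_
    intro i hi
    have : d (i + 1) + hδ i ≠ 0 := hi
    by_contra h
    simp only [Set.mem_union, Function.mem_support, not_or, not_not] at h
    omega
  have hfinner_a : (Function.support fun i => a (i + 1) + hA i).Finite := by
    refine Set.Finite.subset (hfa'.union hfhA) ?_
    intro i hi
    have : a (i + 1) + hA i ≠ 0 := hi
    by_contra h
    simp only [Set.mem_union, Function.mem_support, not_or, not_not] at h
    omega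
  have sh_d : (∑ᶠ i, d (i + 1)) = ∑ᶠ i, d i := by
    have := finsum_comp_equiv (Equiv.addRight (1 : ℤ)) (f := d)
    simpa using this
  have sh_a : (∑ᶠ i, a (i + 1)) = ∑ᶠ i, a i := by
    have := finsum_comp_equiv (Equiv.addRight (1 : ℤ)) (f := a)
    simpa using this
  have split_d : (∑ᶠ i, (d i + (d (i + 1) + hδ i)))
      = (∑ᶠ i, d i) + ((∑ᶠ i, d (i + 1)) + ∑ᶠ i, hδ i) := by
    rw [finsum_add_distrib hfd hfinner_d, finsum_add_distrib hfd' hfhδ]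
  have split_a : (∑ᶠ i, (a i + (a (i + 1) + hA i)))
      = (∑ᶠ i, a i) + ((∑ᶠ i, a (i + 1)) + ∑ᶠ i, hA i) := by
    rw [finsum_add_distrib hfa hfinner_a, finsum_add_distrib hfa' hfhA]
  have mid : (∑ᶠ i, (d i + (d (i + 1) + hδ i))) = ∑ᶠ i, (a i + (a (i + 1) + hA i)) := by
    refine finsum_congr fun i => ?_
    have h1 := hA_eq i
    have h2 := hδ_eq i
    omega
  have eq1 : (∑ᶠ i, d i) + ((∑ᶠ i, d i) + ∑ᶠ i, hδ i)
      = (∑ᶠ i, a i) + ((∑ᶠ i, a i) + ∑ᶠ i, hA i) := by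
    have h := mid
    rw [split_d, split_a, sh_d, sh_a] at h
    exact h
  have hAs : (∑ᶠ i, hA i) = ∑ i ∈ U, hA i := finsum_eq_sum_of_support_subset _ shA
  have hδs : (∑ᶠ i, hδ i) = ∑ i ∈ U, hδ i := finsum_eq_sum_of_support_subset _ shδ
  have le1 : (∑ i ∈ U, hA i) ≤ ∑ i ∈ U, hδ i :=
    Finset.sum_le_sum fun i _ => point i
  refine ⟨point, ?_, ?_⟩
  · rw [hAs, hδs] at eq1
    omega
  · rw [hAs, hδs] at eq1
    constructor
    · intro hsum
      have hq : (∑ i ∈ U, hA i) = ∑ i ∈ U, hδ i := by omega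
      have := (Finset.sum_eq_sum_iff_of_le fun i _ => point i).mp hq
      intro k
      by_cases hk : k ∈ U
      · exact this k hk
      · rw [hA0 k hk, hδ0 k hk]
    · intro hall
      have : (∑ i ∈ U, hA i) = ∑ i ∈ U, hδ i :=
        Finset.sum_congr rfl fun i _ => hall i
      omega

/-- In the standing setting, assume `E_i = 0` for all but finitely many `i`, and
`δ_i∘δ_{i+1} = 0`, `δ_i∘P_i = 0`, `A_{i+1}∘A_i = 0` for all `i`.  Then
`dim(ker(A_i)/im(A_{i-1})) ≤ dim(ker(δ_i)/im(δ_{i+1}))` for every `i`, and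
`Σ_i rank(δ_i) ≤ Σ_i rank(A_i)`; moreover equality of the sums holds iff
`dim(ker(A_i)/im(A_{i-1})) = dim(ker(δ_i)/im(δ_{i+1}))` for every `i`.

(Indexing: the statement for all `i ∈ ℤ` is expressed by quantifying over `k ∈ ℤ`, with
`E_{k+1} = E (k+1)`, `A_{k+1} = A (k+1)`, `δ_{k+1} = δ k`, `P_{k+1} = P k`; the sums of the ranks
over all `i ∈ ℤ` are expressed as `finsum`s.) -/
theorem statement8 (E : ℤ → Type*) [∀ i, AddCommGroup (E i)] [∀ i, Module ℂ (E i)]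
    [∀ i, FiniteDimensional ℂ (E i)]
    (hE : {i : ℤ | ∃ x : E i, x ≠ 0}.Finite)
    (A : ∀ i : ℤ, E i →ₗ[ℂ] E (i + 1)) (δ : ∀ i : ℤ, E (i + 1) →ₗ[ℂ] E i)
    (P : ∀ i : ℤ, E (i + 1) →ₗ[ℂ] E (i + 1))
    (hP : ∀ i : ℤ, IsGenZeroProj (Box E A δ i) (P i))
    (hδδ : ∀ i : ℤ, δ i ∘ₗ δ (i + 1) = 0)
    (hδP : ∀ i : ℤ, δ i ∘ₗ P i = 0)
    (hAA : ∀ i : ℤ, A (i + 1) ∘ₗ A i = 0) :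
    (∀ k : ℤ,
      Module.finrank ℂ (↥(LinearMap.ker (A (k + 1))) ⧸
          Submodule.comap (LinearMap.ker (A (k + 1))).subtype (LinearMap.range (A k)))
        ≤ Module.finrank ℂ (↥(LinearMap.ker (δ k)) ⧸
          Submodule.comap (LinearMap.ker (δ k)).subtype (LinearMap.range (δ (k + 1))))) ∧
    (∑ᶠ i : ℤ, Module.finrank ℂ ↥(LinearMap.range (δ i)))
      ≤ (∑ᶠ i : ℤ, Module.finrank ℂ ↥(LinearMap.range (A i))) ∧
    (((∑ᶠ i : ℤ, Module.finrank ℂ ↥(LinearMap.range (δ i)))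
        = (∑ᶠ i : ℤ, Module.finrank ℂ ↥(LinearMap.range (A i)))) ↔
      (∀ k : ℤ,
        Module.finrank ℂ (↥(LinearMap.ker (A (k + 1))) ⧸
            Submodule.comap (LinearMap.ker (A (k + 1))).subtype (LinearMap.range (A k)))
          = Module.finrank ℂ (↥(LinearMap.ker (δ k)) ⧸
            Submodule.comap (LinearMap.ker (δ k)).subtype (LinearMap.range (δ (k + 1)))))) := by
  refine sum_lemma
    (fun i => Module.finrank ℂ ↥(LinearMap.range (A i)))
    (fun i => Module.finrank ℂ ↥(LinearMap.range (δ i)))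
    (fun i => Module.finrank ℂ (E (i + 1)))
    (fun k => Module.finrank ℂ (↥(LinearMap.ker (A (k + 1))) ⧸
        Submodule.comap (LinearMap.ker (A (k + 1))).subtype (LinearMap.range (A k))))
    (fun k => Module.finrank ℂ (↥(LinearMap.ker (δ k)) ⧸
        Submodule.comap (LinearMap.ker (δ k)).subtype (LinearMap.range (δ (k + 1)))))
    (hE.toFinset.image (fun i => i - 1))
    (fun k => hom_count (A k) (A (k + 1)) (hAA k))
    (fun k => hom_count (δ (k + 1)) (δ k) (hδδ k))
    (key_ineq E A δ P hP hδδ hδP hAA)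
    ?_
  intro i hi
  have hni : ∀ x : E (i + 1), x = 0 := by
    by_contra h
    push_neg at h
    obtain ⟨x, hx⟩ := h
    exact hi (Finset.mem_image.mpr ⟨i + 1, hE.mem_toFinset.mpr ⟨x, hx⟩, by ring⟩)
  have hsub : Subsingleton (E (i + 1)) := ⟨fun u v => by rw [hni u, hni v]⟩
  have h0 : Module.finrank ℂ (E (i + 1)) = 0 := Module.finrank_zero_of_subsingleton
  refine ⟨?_, ?_, h0⟩
  · show Module.finrank ℂ ↥(LinearMap.range (A i)) = 0
    have := Submodule.finrank_le (LinearMap.range (A i))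
    omega
  · show Module.finrank ℂ ↥(LinearMap.range (δ i)) = 0
    have hbot : LinearMap.range (δ i) = ⊥ := by
      rw [eq_bot_iff]
      rintro _ ⟨y, rfl⟩
      rw [hni y, map_zero]
      exact Submodule.zero_mem ⊥
    rw [hbot]
    exact finrank_bot ℂ _
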